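/- For real numbers λ₁,λ₂,λ₃, the 9×9 matrix I₃ ⊗ I₃ + (3/2)·(λ₁·J₁⊗J₁ − λ₂·J₂⊗J₂ + λ₃·J₃⊗J₃) is positive semidefinite if and only if 4 − 9(λ₁² + λ₂² + λ₃²) + 27·λ₁λ₂λ₃ ≥ 0 and |λᵢ| ≤ 2/3 for each i ∈ {1,2,3}. -/

import Mathlib

open Matrix Kronecker
open scoped ComplexOrder

/-!
J₁ and J₃ are real matrices and J₂ is `i` times a real matrix, so the matrix is the
complexification of a real symmetric matrix and positive semidefiniteness can be tested on real
vectors. Its quadratic form splits into orthogonal pieces: on the span of `|m₁ m₂⟩` with `m₁ + m₂`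
odd the eigenvalues are `1 ± 3λ₁/2` and `1 ± 3λ₂/2`, on `|1,1⟩ - |-1,-1⟩` and `|1,-1⟩ - |-1,1⟩`
they are `1 ± 3λ₃/2`, and what is left is a 3×3 arrowhead block. Completing the square in its
corner reduces that block to a 2×2 Schur complement whose determinant is
`(4 - 9(λ₁² + λ₂² + λ₃²) + 27λ₁λ₂λ₃)/16`; the bounds on `λ₁, λ₂` make the trace of the Schur
complement nonnegative, so its diagonal is nonnegative as soon as its determinant is.
-/

/-- The spin-1 angular momentum matrix J₁. -/
noncomputable def spinOneJ1 : Matrix (Fin 3) (Fin 3) ℂ :=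
  ((1 / Real.sqrt 2 : ℝ) : ℂ) • !![0, 1, 0; 1, 0, 1; 0, 1, 0]

/-- The spin-1 angular momentum matrix J₂. -/
noncomputable def spinOneJ2 : Matrix (Fin 3) (Fin 3) ℂ :=
  ((1 / Real.sqrt 2 : ℝ) : ℂ) • !![0, -Complex.I, 0; Complex.I, 0, -Complex.I; 0, Complex.I, 0]

/-- The spin-1 angular momentum matrix J₃. -/
def spinOneJ3 : Matrix (Fin 3) (Fin 3) ℂ := !![1, 0, 0; 0, 0, 0; 0, 0, -1]

section Quadratic

variable {K : Type*} [Field K] [LinearOrder K] [IsStrictOrderedRing K]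

theorem forall_binary_quadratic_nonneg_iff {s t c : K} :
    (∀ v w : K, 0 ≤ s * v ^ 2 + t * w ^ 2 + 2 * c * v * w) ↔ 0 ≤ s ∧ 0 ≤ t ∧ c ^ 2 ≤ s * t := by
  constructor
  · intro h
    refine ⟨by simpa using h 1 0, by simpa using h 0 1, ?_⟩
    have := discrim_le_zero (a := s) (b := 2 * c) (c := t) fun v ↦ (h v 1).trans_eq (by ring)
    rw [discrim] at this
    linarith
  · rintro ⟨hs, ht, hc⟩ v w
    rcases hs.eq_or_lt with rfl | hs
    · obtain rfl : c = 0 := by simpa using hc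
      simpa using mul_nonneg ht (sq_nonneg w)
    · refine nonneg_of_mul_nonneg_right ?_ hs
      nlinarith [sq_nonneg (s * v + c * w), mul_nonneg (sub_nonneg.2 hc) (sq_nonneg w)]

theorem forall_arrowhead_quadratic_nonneg_iff {p q a b : K} :
    (∀ u v w : K, 0 ≤ u ^ 2 + p * v ^ 2 + q * w ^ 2 + 2 * a * u * v + 2 * b * u * w) ↔
      0 ≤ p - a ^ 2 ∧ 0 ≤ q - b ^ 2 ∧ (a * b) ^ 2 ≤ (p - a ^ 2) * (q - b ^ 2) := by
  have hsq : ∀ u v w : K, u ^ 2 + p * v ^ 2 + q * w ^ 2 + 2 * a * u * v + 2 * b * u * w =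
      (u + a * v + b * w) ^ 2 +
        ((p - a ^ 2) * v ^ 2 + (q - b ^ 2) * w ^ 2 + 2 * (-(a * b)) * v * w) :=
    fun u v w ↦ by ring
  rw [← neg_sq (a * b), ← forall_binary_quadratic_nonneg_iff]
  simp only [hsq]
  refine ⟨fun h v w ↦ ?_, fun h u v w ↦ add_nonneg (sq_nonneg _) (h v w)⟩
  simpa using h (-(a * v + b * w)) v w

theorem nonneg_and_nonneg_of_sq_le_mul {x y c : K} (hsum : 0 ≤ x + y) (hmul : c ^ 2 ≤ x * y) :
    0 ≤ x ∧ 0 ≤ y := by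
  have hxy : 0 ≤ x * y := (sq_nonneg c).trans hmul
  constructor <;> nlinarith

end Quadratic

section RealMatrix

variable {n : Type*} [Fintype n]

theorem Matrix.star_dotProduct_map_ofReal_mulVec {A : Matrix n n ℝ} (hA : A.IsHermitian)
    (x : n → ℂ) :
    star x ⬝ᵥ (A.map (↑) *ᵥ x) =
      (((fun i ↦ (x i).re) ⬝ᵥ A *ᵥ fun i ↦ (x i).re) +
        ((fun i ↦ (x i).im) ⬝ᵥ A *ᵥ fun i ↦ (x i).im) : ℝ) := by
  apply Complex.ext
  · simp [dotProduct, mulVec, Finset.mul_sum, Complex.mul_re, ← Finset.sum_add_distrib]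
  · simp [dotProduct, mulVec, Finset.mul_sum, Complex.mul_im, Complex.mul_re,
      Finset.sum_add_distrib]
    rw [Finset.sum_comm, add_neg_eq_zero]
    refine Finset.sum_congr rfl fun i _ ↦ Finset.sum_congr rfl fun j _ ↦ ?_
    rw [← hA.apply i j, star_trivial]
    ring

omit [Fintype n] in
theorem Matrix.isHermitian_map_ofReal_iff {A : Matrix n n ℝ} :
    (A.map (↑) : Matrix n n ℂ).IsHermitian ↔ A.IsHermitian := by
  simp only [IsHermitian.ext_iff, map_apply, Complex.star_def, Complex.conj_ofReal,
    Complex.ofReal_inj, star_trivial]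

theorem Matrix.posSemidef_map_ofReal_iff {A : Matrix n n ℝ} :
    (A.map (↑) : Matrix n n ℂ).PosSemidef ↔ A.PosSemidef := by
  simp only [posSemidef_iff_dotProduct_mulVec, isHermitian_map_ofReal_iff]
  refine and_congr_right fun hA ↦ ⟨fun h x ↦ ?_, fun h x ↦ ?_⟩
  · simpa [star_dotProduct_map_ofReal_mulVec hA] using h (fun i ↦ x i)
  · rw [star_dotProduct_map_ofReal_mulVec hA, Complex.zero_le_real]
    simpa using add_nonneg (h fun i ↦ (x i).re) (h fun i ↦ (x i).im)

end RealMatrix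

theorem Matrix.IsSymm.kronecker {m n α : Type*} [CommMagma α] {A : Matrix m m α} {B : Matrix n n α}
    (hA : A.IsSymm) (hB : B.IsSymm) : (A ⊗ₖ B).IsSymm := by
  rw [IsSymm, ← kroneckerMap_transpose, hA.eq, hB.eq]

theorem Matrix.isSymm_kronecker_of_transpose_eq_neg {m n α : Type*} [CommRing α]
    {A : Matrix m m α} {B : Matrix n n α} (hA : Aᵀ = -A) (hB : Bᵀ = -B) : (A ⊗ₖ B).IsSymm := by
  rw [IsSymm, ← kroneckerMap_transpose, hA, hB]
  ext
  simp [kroneckerMap_apply]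

def spinOneX : Matrix (Fin 3) (Fin 3) ℝ := !![0, 1, 0; 1, 0, 1; 0, 1, 0]
def spinOneY : Matrix (Fin 3) (Fin 3) ℝ := !![0, -1, 0; 1, 0, -1; 0, 1, 0]
def spinOneZ : Matrix (Fin 3) (Fin 3) ℝ := !![1, 0, 0; 0, 0, 0; 0, 0, -1]

lemma spinOneX_isSymm : spinOneX.IsSymm := by
  ext i j; fin_cases i <;> fin_cases j <;> rfl

lemma spinOneY_transpose : spinOneYᵀ = -spinOneY := by
  ext i j; fin_cases i <;> fin_cases j <;> simp [spinOneY]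

lemma spinOneZ_isSymm : spinOneZ.IsSymm := by
  ext i j; fin_cases i <;> fin_cases j <;> rfl

lemma spinOneJ1_eq : spinOneJ1 = ((Real.sqrt 2 : ℂ)⁻¹) • spinOneX.map (↑) := by
  ext i j; fin_cases i <;> fin_cases j <;> simp [spinOneJ1, spinOneX]

lemma spinOneJ2_eq : spinOneJ2 = ((Real.sqrt 2 : ℂ)⁻¹ * Complex.I) • spinOneY.map (↑) := by
  ext i j; fin_cases i <;> fin_cases j <;> simp [spinOneJ2, spinOneY]

lemma spinOneJ3_eq : spinOneJ3 = spinOneZ.map (↑) := by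
  ext i j; fin_cases i <;> fin_cases j <;> simp [spinOneJ3, spinOneZ]

noncomputable def qutritChoiReal (l1 l2 l3 : ℝ) : Matrix (Fin 3 × Fin 3) (Fin 3 × Fin 3) ℝ :=
  1 ⊗ₖ 1 + (3 / 2 : ℝ) • ((l1 / 2) • (spinOneX ⊗ₖ spinOneX) +
    (l2 / 2) • (spinOneY ⊗ₖ spinOneY) + l3 • (spinOneZ ⊗ₖ spinOneZ))

lemma qutritChoi_eq_map_ofReal (l1 l2 l3 : ℝ) :
    (1 : Matrix (Fin 3) (Fin 3) ℂ) ⊗ₖ (1 : Matrix (Fin 3) (Fin 3) ℂ) +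
      ((3 / 2 : ℝ) : ℂ) • ((l1 : ℂ) • (spinOneJ1 ⊗ₖ spinOneJ1) -
        (l2 : ℂ) • (spinOneJ2 ⊗ₖ spinOneJ2) +
        (l3 : ℂ) • (spinOneJ3 ⊗ₖ spinOneJ3)) = (qutritChoiReal l1 l2 l3).map (↑) := by
  have hX : ((Real.sqrt 2 : ℂ)⁻¹) ^ 2 = 1 / 2 := by
    rw [← Complex.ofReal_inv, ← Complex.ofReal_pow, inv_pow, Real.sq_sqrt zero_le_two]
    push_cast; ring
  have hY : ((Real.sqrt 2 : ℂ)⁻¹ * Complex.I) ^ 2 = -1 / 2 := by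
    rw [mul_pow, hX, Complex.I_sq]; ring
  ext ⟨i, j⟩ ⟨k, l⟩
  simp only [spinOneJ1_eq, spinOneJ2_eq, spinOneJ3_eq, qutritChoiReal, kroneckerMap_apply,
    Matrix.add_apply, Matrix.sub_apply, Matrix.smul_apply, map_apply, smul_eq_mul,
    Matrix.one_apply]
  push_cast [apply_ite]
  linear_combination (3 / 2 : ℂ) *
    (l1 * spinOneX i k * spinOneX j l * hX - l2 * spinOneY i k * spinOneY j l * hY)

lemma isHermitian_qutritChoiReal (l1 l2 l3 : ℝ) : (qutritChoiReal l1 l2 l3).IsHermitian := by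
  rw [isHermitian_iff_isSymm]
  exact (isSymm_one.kronecker isSymm_one).add <| IsSymm.smul (((spinOneX_isSymm.kronecker
    spinOneX_isSymm).smul _).add ((isSymm_kronecker_of_transpose_eq_neg spinOneY_transpose
    spinOneY_transpose).smul _) |>.add ((spinOneZ_isSymm.kronecker spinOneZ_isSymm).smul _)) _

lemma dotProduct_qutritChoiReal_mulVec (l1 l2 l3 : ℝ) (y : Fin 3 × Fin 3 → ℝ) :
    y ⬝ᵥ qutritChoiReal l1 l2 l3 *ᵥ y =
      (1 + 3 / 2 * l1) / 4 * (y (0, 1) + y (1, 2) + y (2, 1) + y (1, 0)) ^ 2 +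
      (1 - 3 / 2 * l1) / 4 * (y (0, 1) - y (1, 2) + y (2, 1) - y (1, 0)) ^ 2 +
      (1 + 3 / 2 * l2) / 4 * (y (0, 1) + y (1, 2) - y (2, 1) - y (1, 0)) ^ 2 +
      (1 - 3 / 2 * l2) / 4 * (y (0, 1) - y (1, 2) - y (2, 1) + y (1, 0)) ^ 2 +
      (1 / 2 + 3 / 4 * l3) * (y (0, 0) - y (2, 2)) ^ 2 +
      (1 / 2 - 3 / 4 * l3) * (y (0, 2) - y (2, 0)) ^ 2 +
      (y (1, 1) ^ 2 + (1 / 2 + 3 / 4 * l3) * (y (0, 0) + y (2, 2)) ^ 2 +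
        (1 / 2 - 3 / 4 * l3) * (y (0, 2) + y (2, 0)) ^ 2 +
        2 * (3 / 4 * (l1 + l2)) * y (1, 1) * (y (0, 0) + y (2, 2)) +
        2 * (3 / 4 * (l1 - l2)) * y (1, 1) * (y (0, 2) + y (2, 0))) := by
  simp [qutritChoiReal, spinOneX, spinOneY, spinOneZ, dotProduct, mulVec, Fintype.sum_prod_type,
    Fin.sum_univ_three, kroneckerMap_apply, Matrix.one_apply]
  ring

lemma forall_dotProduct_qutritChoiReal_mulVec_nonneg_iff (l1 l2 l3 : ℝ) :
    (∀ y, 0 ≤ y ⬝ᵥ qutritChoiReal l1 l2 l3 *ᵥ y) ↔ (|l1| ≤ 2 / 3 ∧ |l2| ≤ 2 / 3) ∧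
      ∀ u v w : ℝ, 0 ≤ u ^ 2 + (1 / 2 + 3 / 4 * l3) * v ^ 2 + (1 / 2 - 3 / 4 * l3) * w ^ 2 +
        2 * (3 / 4 * (l1 + l2)) * u * v + 2 * (3 / 4 * (l1 - l2)) * u * w := by
  simp only [dotProduct_qutritChoiReal_mulVec]
  constructor
  · intro h
    have odd : ∀ s t : ℝ, 0 ≤ (1 + 3 / 2 * l1) / 4 * (1 + s + t + s * t) ^ 2 +
        (1 - 3 / 2 * l1) / 4 * (1 - s + t - s * t) ^ 2 +
        (1 + 3 / 2 * l2) / 4 * (1 + s - t - s * t) ^ 2 +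
        (1 - 3 / 2 * l2) / 4 * (1 - s - t + s * t) ^ 2 := fun s t ↦ by
      simpa using h fun p ↦ ![![0, 1, 0], ![s * t, 0, s], ![0, t, 0]] p.1 p.2
    have h1 := odd 1 1
    have h2 := odd (-1) 1
    have h3 := odd 1 (-1)
    have h4 := odd (-1) (-1)
    norm_num at h1 h2 h3 h4
    refine ⟨⟨abs_le.2 ⟨by linarith, by linarith⟩, abs_le.2 ⟨by linarith, by linarith⟩⟩,
      fun u v w ↦ ?_⟩
    simpa [add_halves] using h fun p ↦ ![![v / 2, 0, w / 2], ![0, u, 0], ![w / 2, 0, v / 2]] p.1 p.2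
  · rintro ⟨⟨h1, h2⟩, h⟩ y
    have hp := h 0 1 0
    have hq := h 0 0 1
    norm_num at hp hq
    refine add_nonneg (add_nonneg (add_nonneg (add_nonneg (add_nonneg (add_nonneg ?_ ?_) ?_) ?_)
      ?_) ?_) (h _ _ _) <;>
    refine mul_nonneg ?_ (sq_nonneg _) <;> linarith [abs_le.1 h1, abs_le.1 h2]

theorem qutrit_choi_posSemidef_iff (l1 l2 l3 : ℝ) :
    ((1 : Matrix (Fin 3) (Fin 3) ℂ) ⊗ₖ (1 : Matrix (Fin 3) (Fin 3) ℂ) +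
      ((3 / 2 : ℝ) : ℂ) • ((l1 : ℂ) • (spinOneJ1 ⊗ₖ spinOneJ1) -
        (l2 : ℂ) • (spinOneJ2 ⊗ₖ spinOneJ2) +
        (l3 : ℂ) • (spinOneJ3 ⊗ₖ spinOneJ3))).PosSemidef ↔
    (4 - 9 * (l1 ^ 2 + l2 ^ 2 + l3 ^ 2) + 27 * (l1 * l2 * l3) ≥ 0 ∧
      |l1| ≤ 2 / 3 ∧ |l2| ≤ 2 / 3 ∧ |l3| ≤ 2 / 3) := by
  rw [qutritChoi_eq_map_ofReal, posSemidef_map_ofReal_iff, posSemidef_iff_dotProduct_mulVec]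
  simp only [isHermitian_qutritChoiReal, star_trivial, true_and,
    forall_dotProduct_qutritChoiReal_mulVec_nonneg_iff, forall_arrowhead_quadratic_nonneg_iff]
  set P := 1 / 2 + 3 / 4 * l3 - (3 / 4 * (l1 + l2)) ^ 2 with hP
  set Q := 1 / 2 - 3 / 4 * l3 - (3 / 4 * (l1 - l2)) ^ 2 with hQ
  have hdet : P * Q - (3 / 4 * (l1 + l2) * (3 / 4 * (l1 - l2))) ^ 2 =
      (4 - 9 * (l1 ^ 2 + l2 ^ 2 + l3 ^ 2) + 27 * (l1 * l2 * l3)) / 16 := by ring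
  have htrace : P + Q = 1 - 9 / 8 * (l1 ^ 2 + l2 ^ 2) := by ring
  constructor
  · rintro ⟨⟨h1, h2⟩, hP0, hQ0, hC⟩
    refine ⟨by linarith, h1, h2, abs_le.2 ⟨?_, ?_⟩⟩ <;>
      linarith [sq_nonneg (3 / 4 * (l1 + l2)), sq_nonneg (3 / 4 * (l1 - l2))]
  · rintro ⟨hc, h1, h2, -⟩
    have hl1 := sq_le_sq' (abs_le.1 h1).1 (abs_le.1 h1).2
    have hl2 := sq_le_sq' (abs_le.1 h2).1 (abs_le.1 h2).2
    have hC : (3 / 4 * (l1 + l2) * (3 / 4 * (l1 - l2))) ^ 2 ≤ P * Q := by linarith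
    obtain ⟨hP0, hQ0⟩ := nonneg_and_nonneg_of_sq_le_mul (by linarith) hC
    exact ⟨⟨h1, h2⟩, hP0, hQ0, hC⟩
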